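/- arXiv:1507.07121 — 2 statements merged into one kernel-verified Lean document; each statement's English description precedes it below -/
import Mathlib

section
/- Let G = (V,E) be a graph, and let F1, F2 be 2-factors of G with K1 and K2 components respectively. Suppose there is a function alpha : V -> rationals with 0 <= alpha(v) <= 1/6 for all v, such that for every cycle D of F2 the sum of alpha over V(D) equals 1, and for every cycle C of F1 there are at least 4 vertices v in V(C) with alpha(v) <= 1/12. Then K1/4 + 3*K2/4 <= |V|/8, and hence min(K1, K2) <= |V|/8. -/
/-- Let `F1`, `F2` be 2-factors of `G` with `K1` and `K2` components.  If
`alpha : V → ℚ` satisfies `0 ≤ alpha v ≤ 1/6` for all `v`, sums to `1` on the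
vertex set of each cycle of `F2`, and each cycle of `F1` contains at least `4`
vertices with `alpha v ≤ 1/12`, then `K1/4 + 3*K2/4 ≤ |V|/8`, and hence
`min K1 K2 ≤ |V|/8`. -/
theorem alpha_bound_few_components {V : Type*} [Fintype V] [DecidableEq V]
    (G F₁ F₂ : SimpleGraph V) [DecidableRel F₁.Adj] [DecidableRel F₂.Adj]
    [Fintype F₁.ConnectedComponent] [Fintype F₂.ConnectedComponent]
    [DecidableEq F₁.ConnectedComponent] [DecidableEq F₂.ConnectedComponent]
    (hF₁ : F₁ ≤ G) (hF₂ : F₂ ≤ G)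
    (h2F₁ : ∀ v : V, F₁.degree v = 2) (h2F₂ : ∀ v : V, F₂.degree v = 2)
    (alpha : V → ℚ)
    (hrange : ∀ v : V, 0 ≤ alpha v ∧ alpha v ≤ 1/6)
    (hsum : ∀ d : F₂.ConnectedComponent,
      ∑ v ∈ Finset.univ.filter (fun v => F₂.connectedComponentMk v = d), alpha v = 1)
    (hfour : ∀ c : F₁.ConnectedComponent,
      4 ≤ (Finset.univ.filter
            (fun v => F₁.connectedComponentMk v = c ∧ alpha v ≤ 1/12)).card) :
    (Fintype.card F₁.ConnectedComponent : ℚ) / 4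
        + 3 * (Fintype.card F₂.ConnectedComponent : ℚ) / 4
      ≤ (Fintype.card V : ℚ) / 8 ∧
    (min (Fintype.card F₁.ConnectedComponent) (Fintype.card F₂.ConnectedComponent) : ℚ)
      ≤ (Fintype.card V : ℚ) / 8 := by
  set K1 := Fintype.card F₁.ConnectedComponent with hK1def
  set K2 := Fintype.card F₂.ConnectedComponent with hK2def
  set n := Fintype.card V with hndef
  -- total sum of alpha equals K2
  have hK2 : ∑ v : V, alpha v = (K2 : ℚ) := by
    rw [← Finset.sum_fiberwise Finset.univ (fun v => F₂.connectedComponentMk v) alpha,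
      Finset.sum_congr rfl (fun d _ => hsum d), Finset.sum_const, nsmul_eq_mul, mul_one,
      Finset.card_univ]
  -- fiber cards of F₁ sum to n
  have hcards : ∑ c : F₁.ConnectedComponent,
      ((Finset.univ.filter (fun v => F₁.connectedComponentMk v = c)).card : ℚ)
      = (n : ℚ) := by
    rw [← Nat.cast_sum, ← Finset.card_eq_sum_card_fiberwise
      (fun v (_ : v ∈ Finset.univ) => Finset.mem_univ (F₁.connectedComponentMk v)),
      Finset.card_univ]
  -- per F₁-component bound
  have hcomp : ∀ c : F₁.ConnectedComponent,
      ∑ v ∈ Finset.univ.filter (fun v => F₁.connectedComponentMk v = c), alpha v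
        ≤ ((Finset.univ.filter (fun v => F₁.connectedComponentMk v = c)).card : ℚ) / 6
          - 1/3 := by
    intro c
    set S := Finset.univ.filter (fun v => F₁.connectedComponentMk v = c) with hS
    set T := Finset.univ.filter
      (fun v => F₁.connectedComponentMk v = c ∧ alpha v ≤ 1/12) with hT
    have hTS : T ⊆ S := by
      intro v hv
      simp only [hT, hS, Finset.mem_filter] at *
      exact ⟨hv.1, hv.2.1⟩
    have hsplit : ∑ v ∈ S, alpha v = ∑ v ∈ S \ T, alpha v + ∑ v ∈ T, alpha v :=
      (Finset.sum_sdiff hTS).symm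
    have hTbound : ∑ v ∈ T, alpha v ≤ (T.card : ℚ) * (1/12) := by
      have h := Finset.sum_le_card_nsmul T alpha (1/12) (by
        intro v hv
        simp only [hT, Finset.mem_filter] at hv
        exact hv.2.2)
      simpa [nsmul_eq_mul] using h
    have hSTbound : ∑ v ∈ S \ T, alpha v ≤ ((S \ T).card : ℚ) * (1/6) := by
      have h := Finset.sum_le_card_nsmul (S \ T) alpha (1/6) (fun v _ => (hrange v).2)
      simpa [nsmul_eq_mul] using h
    have hcardsd : ((S \ T).card : ℚ) = (S.card : ℚ) - (T.card : ℚ) := by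
      rw [Finset.card_sdiff_of_subset hTS]
      have := Finset.card_le_card hTS
      push_cast [this]
      ring
    have hT4 : (4 : ℚ) ≤ (T.card : ℚ) := by exact_mod_cast hfour c
    rw [hsplit]
    calc ∑ v ∈ S \ T, alpha v + ∑ v ∈ T, alpha v
        ≤ ((S \ T).card : ℚ) * (1/6) + (T.card : ℚ) * (1/12) := by
          gcongr <;> simp_all
      _ = (S.card : ℚ) / 6 - (T.card : ℚ) / 12 := by rw [hcardsd]; ring
      _ ≤ (S.card : ℚ) / 6 - 1/3 := by linarith
  -- sum over components
  have hmain : (K2 : ℚ) ≤ (n : ℚ) / 6 - (K1 : ℚ) / 3 := by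
    have := Finset.sum_fiberwise Finset.univ (fun v => F₁.connectedComponentMk v) alpha
    have hle : ∑ c : F₁.ConnectedComponent,
        (∑ v ∈ Finset.univ.filter (fun v => F₁.connectedComponentMk v = c), alpha v)
        ≤ ∑ c : F₁.ConnectedComponent,
          (((Finset.univ.filter (fun v => F₁.connectedComponentMk v = c)).card : ℚ) / 6
            - 1/3) := Finset.sum_le_sum (fun c _ => hcomp c)
    rw [this, hK2] at hle
    have hsum2 : ∑ c : F₁.ConnectedComponent,
        (((Finset.univ.filter (fun v => F₁.connectedComponentMk v = c)).card : ℚ) / 6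
          - 1/3) = (n : ℚ) / 6 - (K1 : ℚ) / 3 := by
      rw [Finset.sum_sub_distrib, ← Finset.sum_div, hcards, Finset.sum_const,
        nsmul_eq_mul, Finset.card_univ, ← hK1def]
      ring
    linarith [hsum2 ▸ hle]
  have hfirst : (K1 : ℚ) / 4 + 3 * (K2 : ℚ) / 4 ≤ (n : ℚ) / 8 := by linarith
  refine ⟨hfirst, ?_⟩
  have h1 := min_le_left (K1 : ℚ) (K2 : ℚ)
  have h2 := min_le_right (K1 : ℚ) (K2 : ℚ)
  linarith
end

section
/- Let C be a cycle in a 2-factor F1 of a bipartite graph G, and suppose D is a cycle of another 2-factor F2 that contains exactly one edge e of C. Then in the 2-factor F2' = F2 symmetric-difference E(C), the vertices of D lie on a cycle strictly larger than D. -/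
open Finset in
lemma even_sum_filter_adj {V : Type*} [DecidableEq V] (G : SimpleGraph V)
    [DecidableRel G.Adj] (s : Finset V) :
    Even (∑ v ∈ s, (s.filter (G.Adj v)).card) := by
  induction s using Finset.induction with
  | empty => simp
  | @insert a s ha ih =>
    rw [Finset.sum_insert ha]
    have h1 : ((insert a s).filter (G.Adj a)).card = (s.filter (G.Adj a)).card := by
      rw [Finset.filter_insert]
      simp [G.irrefl]
    have h2 : ∀ v ∈ s, ((insert a s).filter (G.Adj v)).card
        = (s.filter (G.Adj v)).card + (if G.Adj v a then 1 else 0) := by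
      intro v hv
      rw [Finset.filter_insert]
      split
      · rw [Finset.card_insert_of_notMem (by simp [ha])]
      · simp [*]
    rw [Finset.sum_congr rfl h2, Finset.sum_add_distrib, h1]
    have h3 : (∑ v ∈ s, if G.Adj v a then 1 else 0) = (s.filter (G.Adj a)).card := by
      rw [Finset.card_filter]
      exact Finset.sum_congr rfl (fun v _ => by simp [SimpleGraph.adj_comm])
    rw [h3]
    obtain ⟨r, hr⟩ := ih
    exact ⟨(s.filter (G.Adj a)).card + r, by omega⟩

/-- Let `C` be a cycle of a 2-factor `F₁` of a bipartite graph `G` and let `F₂` be a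
2-factor containing all edges of `E(G) \ F₁` whose cycles alternate with those of `F₁`
(each vertex lies on exactly one edge of `F₁ ∩ F₂`).  If a cycle `D` of `F₂` contains
exactly one edge of `C`, then in `F₂' = F₂ ∆ E(C)` the vertices of `D` lie on a common
cycle strictly larger than `D`. -/
theorem symmDiff_grows_cycle {V : Type*} [Fintype V] [DecidableEq V]
    (G F₁ F₂ : SimpleGraph V)
    [DecidableRel G.Adj] [DecidableRel F₁.Adj] [DecidableRel F₂.Adj]
    (hF₁ : F₁ ≤ G) (hF₂ : F₂ ≤ G) (hbip : G.Colorable 2)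
    (h2F₁ : ∀ v : V, F₁.degree v = 2) (h2F₂ : ∀ v : V, F₂.degree v = 2)
    (hsub : ∀ e ∈ G.edgeSet, e ∉ F₁.edgeSet → e ∈ F₂.edgeSet)
    (halt : ∀ v : V,
      ((F₁.edgeFinset ∩ F₂.edgeFinset).filter (fun e => v ∈ e)).card = 1)
    (C : F₁.ConnectedComponent) (D : F₂.ConnectedComponent)
    (e₀ : Sym2 V)
    (hone : {e : Sym2 V |
        (e ∈ F₂.edgeSet ∧ ∀ x ∈ e, x ∈ D.supp) ∧
        (e ∈ F₁.edgeSet ∧ ∀ x ∈ e, x ∈ C.supp)} = {e₀}) :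
    ∃ d' : (SimpleGraph.fromEdgeSet
        (symmDiff F₂.edgeSet
          {e : Sym2 V | e ∈ F₁.edgeSet ∧ ∀ x ∈ e, x ∈ C.supp})).ConnectedComponent,
      D.supp ⊆ d'.supp ∧ D.supp.ncard < d'.supp.ncard := by
  classical
  set S₁ : Set (Sym2 V) := {e : Sym2 V | e ∈ F₁.edgeSet ∧ ∀ x ∈ e, x ∈ C.supp} with hS₁
  set F' := SimpleGraph.fromEdgeSet (symmDiff F₂.edgeSet S₁) with hF'
  revert hone
  induction e₀ using Sym2.ind with
  | _ a b =>
  intro hone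
  have he₀ : s(a, b) ∈ {e : Sym2 V |
      (e ∈ F₂.edgeSet ∧ ∀ x ∈ e, x ∈ D.supp) ∧
      (e ∈ F₁.edgeSet ∧ ∀ x ∈ e, x ∈ C.supp)} := by
    rw [hone]; rfl
  have heD : ∀ x ∈ s(a, b), x ∈ D.supp := he₀.1.2
  have heC : ∀ x ∈ s(a, b), x ∈ C.supp := he₀.2.2
  have hab₂ : F₂.Adj a b := (SimpleGraph.mem_edgeSet _).mp he₀.1.1
  have hab₁ : F₁.Adj a b := (SimpleGraph.mem_edgeSet _).mp he₀.2.1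
  have hne : a ≠ b := hab₂.ne
  have haD : a ∈ D.supp := heD a (Sym2.mem_mk_left a b)
  have hbD : b ∈ D.supp := heD b (Sym2.mem_mk_right a b)
  have haC : a ∈ C.supp := heC a (Sym2.mem_mk_left a b)
  have hsupp₂ : ∀ {v w : V}, v ∈ D.supp → F₂.Adj v w → w ∈ D.supp := by
    intro v w hv hadj
    rw [SimpleGraph.ConnectedComponent.mem_supp_iff] at hv ⊢
    rw [← hv]
    exact SimpleGraph.ConnectedComponent.sound hadj.symm.reachable
  have hsupp₁ : ∀ {v w : V}, v ∈ C.supp → F₁.Adj v w → w ∈ C.supp := by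
    intro v w hv hadj
    rw [SimpleGraph.ConnectedComponent.mem_supp_iff] at hv ⊢
    rw [← hv]
    exact SimpleGraph.ConnectedComponent.sound hadj.symm.reachable
  have hclass : ∀ {v w : V}, v ∈ D.supp → F₂.Adj v w → s(v, w) ∈ S₁ →
      s(v, w) = s(a, b) := by
    intro v w hv hadj hS
    have hw := hsupp₂ hv hadj
    have hmem : s(v, w) ∈ ({s(a, b)} : Set (Sym2 V)) := by
      rw [← hone]
      refine ⟨⟨(SimpleGraph.mem_edgeSet _).mpr hadj, ?_⟩, hS⟩
      intro x hx
      rcases Sym2.mem_iff.mp hx with rfl | rfl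
      exacts [hv, hw]
    exact hmem
  have hsurv : ∀ {v w : V}, v ∈ D.supp → F₂.Adj v w → s(v, w) ≠ s(a, b) →
      F'.Adj v w := by
    intro v w hv hadj hne'
    rw [hF', SimpleGraph.fromEdgeSet_adj]
    exact ⟨Set.mem_symmDiff.mpr (Or.inl ⟨(SimpleGraph.mem_edgeSet _).mpr hadj,
      fun hS => hne' (hclass hv hadj hS)⟩), hadj.ne⟩
  set Af : Finset V := Finset.univ.filter (fun v => v ∈ D.supp ∧ F'.Reachable a v)
    with hAf
  have hmemAf : ∀ {v : V}, v ∈ Af ↔ v ∈ D.supp ∧ F'.Reachable a v := by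
    intro v; simp [hAf]
  have haAf : a ∈ Af := hmemAf.mpr ⟨haD, SimpleGraph.Reachable.refl a⟩
  have hbAf : b ∈ Af := by
    by_contra hb
    have hdeg : ∀ v ∈ Af,
        (Af.filter (F₂.Adj v)).card + ((F₂.neighborFinset v) \ Af).card = 2 := by
      intro v hv
      have h1 : Af.filter (F₂.Adj v) = (F₂.neighborFinset v) ∩ Af := by
        ext w; simp [SimpleGraph.mem_neighborFinset, and_comm]
      rw [h1, Finset.card_inter_add_card_sdiff]
      exact h2F₂ v
    have hsum : (∑ v ∈ Af, (Af.filter (F₂.Adj v)).card)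
        + ∑ v ∈ Af, ((F₂.neighborFinset v) \ Af).card = 2 * Af.card := by
      rw [← Finset.sum_add_distrib, Finset.sum_congr rfl hdeg, Finset.sum_const,
        smul_eq_mul, mul_comm]
    have hcross : ∑ v ∈ Af, ((F₂.neighborFinset v) \ Af).card = 1 := by
      rw [Finset.sum_eq_single_of_mem a haAf]
      · have hNa : F₂.neighborFinset a \ Af = {b} := by
          ext w
          simp only [Finset.mem_sdiff, SimpleGraph.mem_neighborFinset,
            Finset.mem_singleton]
          constructor
          · rintro ⟨hadj, hw⟩
            by_contra hwb
            have hnee : s(a, w) ≠ s(a, b) := by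
              intro h
              rcases Sym2.eq_iff.mp h with ⟨-, h2⟩ | ⟨h1, h2⟩
              · exact hwb h2
              · exact hne h1
            exact hw (hmemAf.mpr ⟨hsupp₂ haD hadj,
              (SimpleGraph.Reachable.refl a).trans (hsurv haD hadj hnee).reachable⟩)
          · rintro rfl; exact ⟨hab₂, hb⟩
        rw [hNa, Finset.card_singleton]
      · intro v hv hva
        rw [Finset.card_eq_zero, Finset.sdiff_eq_empty_iff_subset]
        intro w hw
        obtain ⟨hvD, hreach⟩ := hmemAf.mp hv
        rw [SimpleGraph.mem_neighborFinset] at hw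
        have hnee : s(v, w) ≠ s(a, b) := by
          intro h
          rcases Sym2.eq_iff.mp h with ⟨h1, -⟩ | ⟨h1, -⟩
          · exact hva h1
          · exact hb (h1 ▸ hv)
        exact hmemAf.mpr ⟨hsupp₂ hvD hw, hreach.trans (hsurv hvD hw hnee).reachable⟩
    obtain ⟨r, hr⟩ := even_sum_filter_adj F₂ Af
    omega
  have hstep : ∀ {v w : V}, v ∈ Af → F₂.Adj v w → w ∈ Af := by
    intro v w hv hadj
    obtain ⟨hvD, hreach⟩ := hmemAf.mp hv
    by_cases h : s(v, w) = s(a, b)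
    · rcases Sym2.eq_iff.mp h with ⟨-, rfl⟩ | ⟨-, rfl⟩
      exacts [hbAf, haAf]
    · exact hmemAf.mpr ⟨hsupp₂ hvD hadj, hreach.trans (hsurv hvD hadj h).reachable⟩
  have hwalk : ∀ {u v : V} (_ : F₂.Walk u v), u ∈ Af → v ∈ Af := by
    intro u v p
    induction p with
    | nil => exact id
    | cons h p ih => exact fun hu => ih (hstep hu h)
  have hDsub : ∀ {v : V}, v ∈ D.supp → v ∈ Af := by
    intro v hv
    have hreach : F₂.Reachable a v := by
      have h1 := (SimpleGraph.ConnectedComponent.mem_supp_iff _ _).mp haD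
      have h2 := (SimpleGraph.ConnectedComponent.mem_supp_iff _ _).mp hv
      exact SimpleGraph.ConnectedComponent.exact (h1.trans h2.symm)
    obtain ⟨p⟩ := hreach
    exact hwalk p haAf
  have hsubset : D.supp ⊆ (F'.connectedComponentMk a).supp := by
    intro v hv
    rw [SimpleGraph.ConnectedComponent.mem_supp_iff]
    exact SimpleGraph.ConnectedComponent.sound ((hmemAf.mp (hDsub hv)).2.symm)
  -- find the extra vertex x
  have hbN : b ∈ F₁.neighborFinset a := (F₁.mem_neighborFinset a b).mpr hab₁
  have hcard : 1 < (F₁.neighborFinset a).card := by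
    have h := h2F₁ a
    rw [← SimpleGraph.card_neighborFinset_eq_degree] at h
    omega
  obtain ⟨x, hxN, hxb⟩ := Finset.exists_mem_ne hcard b
  rw [SimpleGraph.mem_neighborFinset] at hxN
  have hxC : x ∈ C.supp := hsupp₁ haC hxN
  have hxS₁ : s(a, x) ∈ S₁ := by
    refine ⟨(SimpleGraph.mem_edgeSet _).mpr hxN, ?_⟩
    intro y hy
    rcases Sym2.mem_iff.mp hy with rfl | rfl
    exacts [haC, hxC]
  have hxF₂ : s(a, x) ∉ F₂.edgeSet := by
    intro hmem
    obtain ⟨g, hg⟩ := Finset.card_eq_one.mp (halt a)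
    have hg1 : s(a, b) ∈ (F₁.edgeFinset ∩ F₂.edgeFinset).filter (fun e => a ∈ e) := by
      rw [Finset.mem_filter, Finset.mem_inter]
      exact ⟨⟨SimpleGraph.mem_edgeFinset.mpr he₀.2.1,
        SimpleGraph.mem_edgeFinset.mpr he₀.1.1⟩, Sym2.mem_mk_left a b⟩
    have hg2 : s(a, x) ∈ (F₁.edgeFinset ∩ F₂.edgeFinset).filter (fun e => a ∈ e) := by
      rw [Finset.mem_filter, Finset.mem_inter]
      exact ⟨⟨SimpleGraph.mem_edgeFinset.mpr ((SimpleGraph.mem_edgeSet _).mpr hxN),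
        SimpleGraph.mem_edgeFinset.mpr hmem⟩, Sym2.mem_mk_left a x⟩
    rw [hg, Finset.mem_singleton] at hg1 hg2
    have heq : s(a, b) = s(a, x) := hg1.trans hg2.symm
    rcases Sym2.eq_iff.mp heq with ⟨-, h2⟩ | ⟨h1, h2⟩
    · exact hxb h2.symm
    · exact hne h2.symm
  have hx' : F'.Adj a x := by
    rw [hF', SimpleGraph.fromEdgeSet_adj]
    exact ⟨Set.mem_symmDiff.mpr (Or.inr ⟨hxS₁, hxF₂⟩), hxN.ne⟩
  have hxd : x ∈ (F'.connectedComponentMk a).supp := by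
    rw [SimpleGraph.ConnectedComponent.mem_supp_iff]
    exact SimpleGraph.ConnectedComponent.sound hx'.reachable.symm
  have hxD : x ∉ D.supp := by
    intro hxD
    obtain ⟨g, hg⟩ := Finset.card_eq_one.mp (halt x)
    have hgmem : g ∈ (F₁.edgeFinset ∩ F₂.edgeFinset).filter (fun e => x ∈ e) := by
      rw [hg]; exact Finset.mem_singleton_self g
    rw [Finset.mem_filter, Finset.mem_inter] at hgmem
    obtain ⟨⟨hg1, hg2⟩, hgx⟩ := hgmem
    obtain ⟨y, rfl⟩ := Sym2.mem_iff_exists.mp hgx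
    rw [SimpleGraph.mem_edgeFinset] at hg1 hg2
    have hadj1 : F₁.Adj x y := (SimpleGraph.mem_edgeSet _).mp hg1
    have hadj2 : F₂.Adj x y := (SimpleGraph.mem_edgeSet _).mp hg2
    have hmm : s(x, y) ∈ ({s(a, b)} : Set (Sym2 V)) := by
      rw [← hone]
      refine ⟨⟨hg2, ?_⟩, ⟨hg1, ?_⟩⟩
      · intro z hz
        rcases Sym2.mem_iff.mp hz with rfl | rfl
        exacts [hxD, hsupp₂ hxD hadj2]
      · intro z hz
        rcases Sym2.mem_iff.mp hz with rfl | rfl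
        exacts [hxC, hsupp₁ hxC hadj1]
    have heq : s(x, y) = s(a, b) := hmm
    rcases Sym2.eq_iff.mp heq with ⟨h1, -⟩ | ⟨h1, -⟩
    · exact hxN.ne h1.symm
    · exact hxb h1
  exact ⟨F'.connectedComponentMk a, hsubset,
    Set.ncard_lt_ncard ((Set.ssubset_iff_of_subset hsubset).mpr ⟨x, hxd, hxD⟩)
      (Set.toFinite _)⟩
end
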